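/- arXiv:2310.06806 — 2 statements merged into one kernel-verified Lean document; each statement's English description precedes it below -/
import Mathlib

section
/- For any real number s > 0, there exists a constant C_s > 0 such that for every sequence (a_k) of nonnegative reals, one has ∑_{j ∈ ℤ} 2^{2sj} (∑_{k ≥ j} a_k)^2 ≤ C_s ∑_{k ∈ ℤ} 2^{2sk} a_k^2. -/
/-!
Put `b k = 2^{sk} a k`. Then `2^{sj} ∑_{k ≥ j} a k = ∑_{m ≥ 0} 2^{-sm} b (j + m)` is the
correlation of `b` with the kernel `m ↦ 2^{-sm}`, whose sum is `(1 - 2^{-s})⁻¹`. Weighted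
Cauchy–Schwarz against this kernel, followed by summation over `j` (Young's inequality
`ℓ¹ * ℓ² ⊆ ℓ²`), gives the bound with `C_s = (1 - 2^{-s})⁻²`. The estimate is proved in `ℝ≥0∞`,
where every series converges, and then transferred to `ℝ`.
-/

open scoped ENNReal NNReal

theorem ENNReal.two_mul_mul_le_add_sq (x y : ℝ≥0∞) : 2 * x * y ≤ x ^ 2 + y ^ 2 := by
  rcases eq_or_ne x ⊤ with rfl | hx
  · simp
  rcases eq_or_ne y ⊤ with rfl | hy
  · simp
  lift x to ℝ≥0 using hx
  lift y to ℝ≥0 using hy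
  exact_mod_cast two_mul_le_add_sq x y

theorem ENNReal.tsum_mul_tsum {ι κ : Type*} (f : ι → ℝ≥0∞) (g : κ → ℝ≥0∞) :
    (∑' i, f i) * ∑' k, g k = ∑' i, ∑' k, f i * g k := by
  simp_rw [ENNReal.tsum_mul_left, ENNReal.tsum_mul_right]

theorem ENNReal.sq_tsum_mul_le {ι : Type*} (w x : ι → ℝ≥0∞) :
    (∑' i, w i * x i) ^ 2 ≤ (∑' i, w i) * ∑' i, w i * x i ^ 2 := by
  refine (ENNReal.mul_le_mul_iff_right two_ne_zero ENNReal.ofNat_ne_top).mp ?_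
  calc 2 * (∑' i, w i * x i) ^ 2
      = ∑' i, ∑' k, w i * w k * (2 * x i * x k) := by
        rw [sq, ENNReal.tsum_mul_tsum, ← ENNReal.tsum_mul_left]
        refine tsum_congr fun i => ?_
        rw [← ENNReal.tsum_mul_left]
        exact tsum_congr fun k => by ring
    _ ≤ ∑' i, ∑' k, w i * w k * (x i ^ 2 + x k ^ 2) := by
        gcongr with i k
        exact ENNReal.two_mul_mul_le_add_sq _ _
    _ = ∑' i, ∑' k, w i * x i ^ 2 * w k + ∑' k, ∑' i, w k * (w i * x i ^ 2) := by
        rw [← ENNReal.tsum_add]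
        refine tsum_congr fun i => ?_
        rw [← ENNReal.tsum_add]
        exact tsum_congr fun k => by ring
    _ = 2 * ((∑' i, w i) * ∑' i, w i * x i ^ 2) := by
        rw [← ENNReal.tsum_mul_tsum, ← ENNReal.tsum_mul_tsum, mul_comm, two_mul]

theorem ENNReal.tsum_sq_tsum_mul_shift_le (κ : ℕ → ℝ≥0∞) (c : ℤ → ℝ≥0∞) :
    ∑' j : ℤ, (∑' m : ℕ, κ m * c (j + m)) ^ 2 ≤ (∑' m, κ m) ^ 2 * ∑' k, c k ^ 2 := by
  calc ∑' j : ℤ, (∑' m : ℕ, κ m * c (j + m)) ^ 2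
      ≤ ∑' j : ℤ, (∑' m, κ m) * ∑' m : ℕ, κ m * c (j + m) ^ 2 :=
        ENNReal.tsum_le_tsum fun j => ENNReal.sq_tsum_mul_le _ _
    _ = (∑' m, κ m) * ∑' m : ℕ, κ m * ∑' j : ℤ, c (j + m) ^ 2 := by
        rw [ENNReal.tsum_mul_left, ENNReal.tsum_comm]
        exact congrArg _ (tsum_congr fun m => ENNReal.tsum_mul_left)
    _ = (∑' m, κ m) ^ 2 * ∑' k, c k ^ 2 := by
        have hshift (m : ℕ) : ∑' j : ℤ, c (j + m) ^ 2 = ∑' k, c k ^ 2 :=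
          (Equiv.addRight (m : ℤ)).tsum_eq fun k => c k ^ 2
        simp_rw [hshift, ENNReal.tsum_mul_right]
        ring

theorem ENNReal.tsum_two_rpow_mul_sq_tsum_nat_add_le (s : ℝ) (b : ℤ → ℝ≥0∞) :
    ∑' j : ℤ, (2 : ℝ≥0∞) ^ (2 * s * j) * (∑' m : ℕ, b (j + m)) ^ 2
      ≤ (1 - 2 ^ (-s))⁻¹ ^ 2 * ∑' k : ℤ, (2 : ℝ≥0∞) ^ (2 * s * k) * b k ^ 2 := by
  have hsq (x : ℝ) : (2 : ℝ≥0∞) ^ (2 * s * x) = (2 ^ (s * x)) ^ 2 := by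
    rw [← ENNReal.rpow_natCast, ← ENNReal.rpow_mul]
    ring_nf
  have hshift (j : ℤ) (m : ℕ) :
      (2 : ℝ≥0∞) ^ (s * j) = (2 ^ (-s)) ^ m * 2 ^ (s * ↑(j + m)) := by
    rw [← ENNReal.rpow_natCast, ← ENNReal.rpow_mul,
      ← ENNReal.rpow_add _ _ two_ne_zero ENNReal.ofNat_ne_top]
    push_cast
    ring_nf
  convert ENNReal.tsum_sq_tsum_mul_shift_le (fun m : ℕ => (2 ^ (-s) : ℝ≥0∞) ^ m)
    (fun k => 2 ^ (s * k) * b k) using 1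
  · refine tsum_congr fun j => ?_
    rw [hsq, ← mul_pow, ← ENNReal.tsum_mul_left]
    exact congrArg (· ^ 2) (tsum_congr fun m => by rw [hshift j m, mul_assoc])
  · rw [ENNReal.tsum_geometric]
    simp_rw [hsq, mul_pow]

theorem ENNReal.inv_one_sub_two_rpow_neg_ne_top {s : ℝ} (hs : 0 < s) :
    (1 - (2 : ℝ≥0∞) ^ (-s))⁻¹ ≠ ⊤ :=
  ENNReal.inv_ne_top.mpr
    (tsub_pos_of_lt (ENNReal.rpow_lt_one_of_one_lt_of_neg one_lt_two (neg_neg_of_pos hs))).ne'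

theorem tsum_ite_le_eq_tsum_nat_add {α : Type*} [AddCommMonoid α] [TopologicalSpace α]
    (f : ℤ → α) (j : ℤ) :
    ∑' k, (if j ≤ k then f k else 0) = ∑' m : ℕ, f (j + m) := by
  have hinj : Function.Injective fun m : ℕ => j + m := fun m n h => by simpa using h
  rw [← hinj.tsum_eq]
  · simp
  · intro k hk
    have hjk : j ≤ k := by by_contra h; exact hk (if_neg h)
    exact ⟨(k - j).toNat, by simp [hjk]⟩

theorem summable_int_add_nat_iff {α : Type*} [AddCommGroup α] [TopologicalSpace α]
    [IsTopologicalAddGroup α] (f : ℤ → α) (i j : ℤ) :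
    Summable (fun m : ℕ => f (i + m)) ↔ Summable (fun m : ℕ => f (j + m)) := by
  wlog hij : i ≤ j generalizing i j
  · exact (this j i (by omega)).symm
  obtain ⟨n, rfl⟩ := Int.le.dest hij
  rw [← summable_nat_add_iff (f := fun m : ℕ => f (i + m)) n]
  congr! 3 with m
  push_cast
  ring

theorem tsum_two_rpow_mul_sq_tsum_nat_add_le_of_summable {s : ℝ} (hs : 0 < s) {a : ℤ → ℝ}
    (ha : ∀ k, 0 ≤ a k) (htail : ∀ j : ℤ, Summable fun m : ℕ => a (j + m)) :
    ∑' j : ℤ, (2 : ℝ) ^ (2 * s * j) * (∑' m : ℕ, a (j + m)) ^ 2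
      ≤ ((1 - 2 ^ (-s))⁻¹ ^ 2 : ℝ≥0∞).toReal * ∑' k : ℤ, (2 : ℝ) ^ (2 * s * k) * a k ^ 2 := by
  set b := fun k => ENNReal.ofReal (a k)
  have hb (j : ℤ) : ∑' m : ℕ, b (j + m) ≠ ⊤ := (htail j).tsum_ofReal_ne_top
  have hlower : ∑' k : ℤ, (2 : ℝ≥0∞) ^ (2 * s * k) * b k ^ 2
      ≤ ∑' j : ℤ, (2 : ℝ≥0∞) ^ (2 * s * j) * (∑' m : ℕ, b (j + m)) ^ 2 := by
    gcongr with k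
    simpa using ENNReal.le_tsum (f := fun m : ℕ => b (k + m)) 0
  have htop : (1 - 2 ^ (-s))⁻¹ ^ 2 * ∑' k : ℤ, (2 : ℝ≥0∞) ^ (2 * s * k) * b k ^ 2 = ⊤ →
      ∑' j : ℤ, (2 : ℝ≥0∞) ^ (2 * s * j) * (∑' m : ℕ, b (j + m)) ^ 2 = ⊤ := fun h => by
    have hA := ENNReal.pow_ne_top (n := 2) (ENNReal.inv_one_sub_two_rpow_neg_ne_top hs)
    have hR := (ENNReal.mul_eq_top.mp h).resolve_right fun h' => hA h'.1
    exact top_le_iff.mp (hR.2 ▸ hlower)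
  convert ENNReal.toReal_mono' (ENNReal.tsum_two_rpow_mul_sq_tsum_nat_add_le s b) htop using 1
  · rw [ENNReal.tsum_toReal_eq (fun j => by have := hb j; finiteness)]
    refine tsum_congr fun j => ?_
    simp [← ENNReal.toReal_rpow, ENNReal.tsum_toReal_eq, ha, b]
  · rw [ENNReal.toReal_mul, ENNReal.tsum_toReal_eq (fun k => by finiteness)]
    congr 1
    refine tsum_congr fun k => ?_
    simp [← ENNReal.toReal_rpow, ha, b]

/-- For any real `s > 0` there is `C_s > 0` such that for every nonnegative sequence
`(a_k)_{k ∈ ℤ}`,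
`∑_{j ∈ ℤ} 2^{2sj} (∑_{k ≥ j} a_k)² ≤ C_s ∑_{k ∈ ℤ} 2^{2sk} a_k²`. -/
theorem stmt1 (s : ℝ) (hs : 0 < s) :
    ∃ C : ℝ, 0 < C ∧ ∀ a : ℤ → ℝ, (∀ k, 0 ≤ a k) →
      ∑' j : ℤ, (2 : ℝ) ^ (2 * s * (j : ℝ)) *
        (∑' k : ℤ, if j ≤ k then a k else 0) ^ 2
      ≤ C * ∑' k : ℤ, (2 : ℝ) ^ (2 * s * (k : ℝ)) * (a k) ^ 2 := by
  refine ⟨((1 - 2 ^ (-s))⁻¹ ^ 2 : ℝ≥0∞).toReal, ENNReal.toReal_pos (by simp)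
    (ENNReal.pow_ne_top (ENNReal.inv_one_sub_two_rpow_neg_ne_top hs)), fun a ha => ?_⟩
  simp_rw [tsum_ite_le_eq_tsum_nat_add a]
  by_cases htail : ∀ j : ℤ, Summable fun m : ℕ => a (j + m)
  · exact tsum_two_rpow_mul_sq_tsum_nat_add_le_of_summable hs ha htail
  -- One divergent tail makes every tail diverge, and a divergent `tsum` is `0` in `ℝ`.
  push Not at htail
  obtain ⟨j₀, hj₀⟩ := htail
  have hzero (j : ℤ) : ∑' m : ℕ, a (j + m) = 0 :=
    tsum_eq_zero_of_not_summable ((summable_int_add_nat_iff a j₀ j).not.mp hj₀)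
  simp only [hzero, ne_eq, OfNat.ofNat_ne_zero, not_false_eq_true, zero_pow, mul_zero, tsum_zero]
  exact mul_nonneg ENNReal.toReal_nonneg (tsum_nonneg fun k => by positivity)
end

section
/- Let V be a normed space and f ∈ C^k functions from ℝ^n to V whose derivatives up to order k are bounded. Then for any integer 0 < j < k, there is a constant C depending only on j, k, n such that sup‖D^j f‖ ≤ C (sup‖D^k f‖)^{j/k} · (sup‖f‖)^{1−j/k}. -/
/-!
Restrict `f` to a line `s ↦ f (x + s • v)`. Taylor's theorem at the `k` nodes `0, h, …, (k-1) h`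
writes the values `f (x + m h • v)` as a Vandermonde combination of the scaled derivatives
`h^i D^i f(x)(v, …, v) / i!` up to an error `O(h^k M_k)`; inverting the Vandermonde matrix gives
`h ‖D f‖ ≤ C (M₀ + h^k M_k)`. Applied to `D^j f`, whose `(k-j)`-th derivative is `D^k f`, this
bootstraps to `h^j ‖D^j f‖ ≤ C (M₀ + h^k M_k)` for every `h > 0`, and the balancing choice
`h = (M₀ / M_k)^{1/k}` gives the inequality (if `M₀` or `M_k` vanishes, perturb both by `ε`).
-/

open Finset Filter Topology
open scoped Nat

theorem Matrix.sum_vandermonde_inv_smul {K V : Type*} [Field K] [AddCommGroup V] [Module K V]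
    {k : ℕ} {x : Fin k → K} (hx : Function.Injective x) (a : Fin k → V) (i : Fin k) :
    ∑ m, (Matrix.vandermonde x)⁻¹ i m • ∑ l : Fin k, x m ^ (l : ℕ) • a l = a i := by
  have hW : IsUnit (Matrix.vandermonde x).det :=
    isUnit_iff_ne_zero.2 (Matrix.det_vandermonde_ne_zero_iff.2 hx)
  simp_rw [smul_sum, smul_smul]
  rw [sum_comm]
  simp_rw [← sum_smul, ← Matrix.vandermonde_apply, ← Matrix.mul_apply,
    Matrix.nonsing_inv_mul _ hW, Matrix.one_apply, ite_smul, one_smul, zero_smul, sum_ite_eq,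
    if_pos (mem_univ _)]

section

variable {E V : Type*} [NormedAddCommGroup E] [NormedSpace ℝ E] [NormedAddCommGroup V]
  [NormedSpace ℝ V]

theorem Matrix.norm_le_sum_abs_vandermonde_inv_mul {k : ℕ} {x : Fin k → ℝ}
    (hx : Function.Injective x) (a : Fin k → V) {B : ℝ}
    (hB : ∀ m, ‖∑ l : Fin k, x m ^ (l : ℕ) • a l‖ ≤ B) (i : Fin k) :
    ‖a i‖ ≤ (∑ m, |(Matrix.vandermonde x)⁻¹ i m|) * B := by
  rw [← Matrix.sum_vandermonde_inv_smul hx a i, sum_mul]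
  refine (norm_sum_le _ _).trans (sum_le_sum fun m _ => ?_)
  rw [norm_smul, Real.norm_eq_abs]
  exact mul_le_mul_of_nonneg_left (hB m) (abs_nonneg _)

theorem norm_sub_taylor_le_of_norm_iteratedDeriv_le {g : ℝ → V} {n : ℕ} {M t : ℝ}
    (hg : ContDiff ℝ (n + 1) g) (hM : ∀ s, ‖iteratedDeriv (n + 1) g s‖ ≤ M) (ht : 0 ≤ t) :
    ‖g t - ∑ l ∈ range (n + 1), ((l ! : ℝ)⁻¹ * t ^ l) • iteratedDeriv l g 0‖ ≤
      M * t ^ (n + 1) / n ! := by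
  rcases ht.eq_or_lt with rfl | ht
  · simp [sum_range_succ']
  have hwithin : ∀ l ≤ n + 1, ∀ y ∈ Set.Icc 0 t,
      iteratedDerivWithin l g (Set.Icc 0 t) y = iteratedDeriv l g y := fun l hl y hy =>
    iteratedDerivWithin_eq_iteratedDeriv (uniqueDiffOn_Icc ht)
      (hg.contDiffAt.of_le (by exact_mod_cast hl)) hy
  have := taylor_mean_remainder_bound ht.le hg.contDiffOn (Set.right_mem_Icc.2 ht.le)
    fun y hy => (hwithin _ le_rfl y hy).symm ▸ hM y
  rw [taylor_within_apply, sub_zero] at this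
  convert this using 4 with l hl
  rw [hwithin l (by rw [mem_range] at hl; omega) 0 (Set.left_mem_Icc.2 ht.le)]

theorem iteratedDeriv_comp_add_smul {f : E → V} {n i : ℕ} (hf : ContDiff ℝ n f) (hi : i ≤ n)
    (x v : E) (t : ℝ) :
    iteratedDeriv i (fun s : ℝ => f (x + s • v)) t =
      iteratedFDeriv ℝ i f (x + t • v) fun _ => v := by
  have hline : (fun s : ℝ => f (x + s • v)) =
      (fun y => f (x + y)) ∘ ContinuousLinearMap.smulRight (1 : ℝ →L[ℝ] ℝ) v := by
    ext; simp
  have hshift : ContDiff ℝ n fun y => f (x + y) := hf.comp (contDiff_const.add contDiff_id)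
  rw [iteratedDeriv_eq_iteratedFDeriv, hline,
    ContinuousLinearMap.iteratedFDeriv_comp_right _ hshift _ (by exact_mod_cast hi)]
  simp [iteratedFDeriv_comp_add_left]

theorem norm_iteratedFDeriv_iteratedFDeriv {f : E → V} {x : E} (m j : ℕ) :
    ‖iteratedFDeriv ℝ m (iteratedFDeriv ℝ j f) x‖ = ‖iteratedFDeriv ℝ (m + j) f x‖ := by
  induction j generalizing m with
  | zero =>
    rw [iteratedFDeriv_zero_eq_comp, LinearIsometryEquiv.norm_iteratedFDeriv_comp_left, add_zero]
  | succ j ih =>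
    have := LinearIsometryEquiv.norm_iteratedFDeriv_comp_left (𝕜 := ℝ)
      (continuousMultilinearCurryLeftEquiv ℝ (fun _ : Fin (j + 1) => E) V).symm
      (fderiv ℝ (iteratedFDeriv ℝ j f)) x m
    rw [← iteratedFDeriv_succ_eq_comp_left, norm_iteratedFDeriv_fderiv, ih] at this
    rw [this, Nat.add_right_comm, Nat.add_assoc]

end

theorem exists_pow_mul_norm_iteratedDeriv_le {k : ℕ} (i : Fin k) :
    ∃ C > 0, ∀ {V : Type*} [NormedAddCommGroup V] [NormedSpace ℝ V] (g : ℝ → V) (M₀ Mk h : ℝ),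
      ContDiff ℝ k g → (∀ t, ‖g t‖ ≤ M₀) → (∀ t, ‖iteratedDeriv k g t‖ ≤ Mk) → 0 < h →
      h ^ (i : ℕ) * ‖iteratedDeriv i g 0‖ ≤ C * (M₀ + h ^ k * Mk) := by
  obtain ⟨n, rfl⟩ : ∃ n, k = n + 1 := ⟨k - 1, by have := i.pos; omega⟩
  set D := ∑ m, |(Matrix.vandermonde fun m : Fin (n + 1) => (m : ℝ))⁻¹ i m|
  set K : ℝ := (n + 1) ^ (n + 1)
  have hD : 0 ≤ D := sum_nonneg fun _ _ => abs_nonneg _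
  have hK : 1 ≤ K := one_le_pow₀ (by linarith [n.cast_nonneg (α := ℝ)])
  refine ⟨(i ! : ℝ) * (D + 1) * K, by positivity, ?_⟩
  intro V _ _ g M₀ Mk h hg hM₀ hMk hh
  have hM₀0 : 0 ≤ M₀ := (norm_nonneg _).trans (hM₀ 0)
  have hMk0 : 0 ≤ Mk := (norm_nonneg _).trans (hMk 0)
  -- Taylor at `0` gives `g (m * h) ≈ ∑ l, m ^ l • a l`, so `a` is read off through the
  -- inverse Vandermonde matrix of the nodes `m`.
  set a : Fin (n + 1) → V := fun l => ((l ! : ℝ)⁻¹ * h ^ (l : ℕ)) • iteratedDeriv l g 0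
  have hnode (m : Fin (n + 1)) :
      ‖∑ l : Fin (n + 1), (m : ℝ) ^ (l : ℕ) • a l‖ ≤ M₀ + K * h ^ (n + 1) * Mk := by
    have htaylor : ∑ l : Fin (n + 1), (m : ℝ) ^ (l : ℕ) • a l =
        ∑ l ∈ range (n + 1), ((l ! : ℝ)⁻¹ * ((m : ℝ) * h) ^ l) • iteratedDeriv l g 0 := by
      rw [← Fin.sum_univ_eq_sum_range]
      refine sum_congr rfl fun l _ => ?_
      simp only [a, smul_smul, mul_pow]
      ring_nf
    have hrem : Mk * ((m : ℝ) * h) ^ (n + 1) / n ! ≤ K * h ^ (n + 1) * Mk :=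
      calc Mk * ((m : ℝ) * h) ^ (n + 1) / n ! ≤ Mk * ((m : ℝ) * h) ^ (n + 1) :=
            div_le_self (by positivity) (by exact_mod_cast n.factorial_pos)
        _ ≤ Mk * ((n + 1) * h) ^ (n + 1) := by gcongr; exact_mod_cast m.is_lt.le
        _ = K * h ^ (n + 1) * Mk := by rw [mul_pow]; ring
    rw [htaylor]
    refine (norm_le_insert (g (m * h)) _).trans (add_le_add (hM₀ _) ?_)
    exact (norm_sub_taylor_le_of_norm_iteratedDeriv_le hg hMk (by positivity)).trans hrem
  have hcoeff := Matrix.norm_le_sum_abs_vandermonde_inv_mul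
    (fun _ _ h => Fin.ext (Nat.cast_injective h)) a hnode i
  have ha : ‖a i‖ = (i ! : ℝ)⁻¹ * (h ^ (i : ℕ) * ‖iteratedDeriv i g 0‖) := by
    rw [norm_smul, Real.norm_of_nonneg (by positivity), mul_assoc]
  rw [ha, inv_mul_le_iff₀ (by positivity)] at hcoeff
  calc _ ≤ (i ! : ℝ) * (D * (M₀ + K * h ^ (n + 1) * Mk)) := hcoeff
    _ ≤ (i ! : ℝ) * ((D + 1) * (K * M₀ + K * h ^ (n + 1) * Mk)) := by
        gcongr
        · linarith
        · nlinarith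
    _ = (i ! : ℝ) * (D + 1) * K * (M₀ + h ^ (n + 1) * Mk) := by ring

theorem exists_mul_norm_fderiv_le {k : ℕ} (hk : 2 ≤ k) :
    ∃ C > 0, ∀ {E V : Type*} [NormedAddCommGroup E] [NormedSpace ℝ E] [NormedAddCommGroup V]
      [NormedSpace ℝ V] (f : E → V) (M₀ Mk h : ℝ), ContDiff ℝ k f → (∀ x, ‖f x‖ ≤ M₀) →
      (∀ x, ‖iteratedFDeriv ℝ k f x‖ ≤ Mk) → 0 < h →
      ∀ x, h * ‖fderiv ℝ f x‖ ≤ C * (M₀ + h ^ k * Mk) := by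
  obtain ⟨C, hC, hline⟩ := exists_pow_mul_norm_iteratedDeriv_le (⟨1, hk⟩ : Fin k)
  refine ⟨C, hC, fun f M₀ Mk h hf hM₀ hMk hh x => ?_⟩
  have hbound : 0 ≤ C * (M₀ + h ^ k * Mk) / h := by
    have := (norm_nonneg _).trans (hM₀ x)
    have := (norm_nonneg _).trans (hMk x)
    positivity
  rw [← le_div_iff₀' hh]
  refine ContinuousLinearMap.opNorm_le_of_unit_norm hbound fun v hv => ?_
  have hkth (t : ℝ) : ‖iteratedDeriv k (fun s : ℝ => f (x + s • v)) t‖ ≤ Mk := by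
    rw [iteratedDeriv_comp_add_smul hf le_rfl]
    calc _ ≤ ‖iteratedFDeriv ℝ k f (x + t • v)‖ * ∏ _ : Fin k, ‖v‖ :=
          (iteratedFDeriv ℝ k f _).le_opNorm _
      _ ≤ Mk := by simpa [hv] using hMk _
  have hg : ContDiff ℝ k fun s : ℝ => f (x + s • v) := hf.comp (by fun_prop)
  have := hline _ M₀ Mk h hg (fun _ => hM₀ _) hkth hh
  rw [iteratedDeriv_comp_add_smul hf (by omega)] at this
  rw [le_div_iff₀' hh]
  simpa using this

theorem exists_pow_mul_norm_iteratedFDeriv_le {j k : ℕ} (hjk : j < k) :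
    ∃ C > 0, ∀ {E V : Type*} [NormedAddCommGroup E] [NormedSpace ℝ E] [NormedAddCommGroup V]
      [NormedSpace ℝ V] (f : E → V) (M₀ Mk h : ℝ), ContDiff ℝ k f → (∀ x, ‖f x‖ ≤ M₀) →
      (∀ x, ‖iteratedFDeriv ℝ k f x‖ ≤ Mk) → 0 < h →
      ∀ x, h ^ j * ‖iteratedFDeriv ℝ j f x‖ ≤ C * (M₀ + h ^ k * Mk) := by
  induction j with
  | zero =>
    refine ⟨1, one_pos, fun f M₀ Mk h _ hM₀ hMk hh x => ?_⟩
    have := (norm_nonneg _).trans (hMk x)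
    simpa using (hM₀ x).trans (le_add_of_nonneg_right (by positivity))
  | succ j ih =>
    have hjk' : j < k := by omega
    obtain ⟨C, hC, hj⟩ := ih hjk'
    obtain ⟨C₁, hC₁, hderiv⟩ := exists_mul_norm_fderiv_le (k := k - j) (by omega)
    refine ⟨C₁ * (C + 1), by positivity, fun f M₀ Mk h hf hM₀ hMk hh x => ?_⟩
    have hMk0 := (norm_nonneg _).trans (hMk x)
    have hM₀0 := (norm_nonneg _).trans (hM₀ x)
    have hhj : 0 < h ^ j := pow_pos hh j
    have hg := hderiv (iteratedFDeriv ℝ j f) (C * (M₀ + h ^ k * Mk) / h ^ j) Mk h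
      (hf.iteratedFDeriv_right (by exact_mod_cast (Nat.sub_add_cancel hjk'.le).le))
      (fun y => (le_div_iff₀' hhj).2 (hj f M₀ Mk h hf hM₀ hMk hh y))
      (fun y => by
        rw [norm_iteratedFDeriv_iteratedFDeriv, Nat.sub_add_cancel hjk'.le]
        exact hMk y)
      hh x
    rw [norm_fderiv_iteratedFDeriv] at hg
    calc h ^ (j + 1) * ‖iteratedFDeriv ℝ (j + 1) f x‖
        = h ^ j * (h * ‖iteratedFDeriv ℝ (j + 1) f x‖) := by ring
      _ ≤ h ^ j * (C₁ * (C * (M₀ + h ^ k * Mk) / h ^ j + h ^ (k - j) * Mk)) := by gcongr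
      _ = C₁ * (C * (M₀ + h ^ k * Mk) + h ^ j * h ^ (k - j) * Mk) := by field_simp
      _ = C₁ * (C * (M₀ + h ^ k * Mk) + h ^ k * Mk) := by
        rw [← pow_add, Nat.add_sub_cancel' hjk'.le]
      _ ≤ C₁ * (C + 1) * (M₀ + h ^ k * Mk) := by
        rw [mul_assoc]
        gcongr
        nlinarith [pow_pos hh k]

theorem le_two_mul_rpow_mul_rpow_of_forall_pow_mul_le {a A B C : ℝ} {j k : ℕ} (hk : 0 < k)
    (hjk : j ≤ k) (hA : 0 ≤ A) (hB : 0 ≤ B) (hC : 0 ≤ C)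
    (hbound : ∀ h > 0, h ^ j * a ≤ C * (A + h ^ k * B)) :
    a ≤ 2 * C * B ^ ((j : ℝ) / k) * A ^ (1 - (j : ℝ) / k) := by
  set θ : ℝ := j / k
  have hθ0 : 0 ≤ θ := by positivity
  have hθ1 : 0 ≤ 1 - θ := sub_nonneg.2 (div_le_one_of_le₀ (by exact_mod_cast hjk) (by positivity))
  have hpos : ∀ A' B' : ℝ, 0 < A' → 0 < B' → (∀ h > 0, h ^ j * a ≤ C * (A' + h ^ k * B')) →
      a ≤ 2 * C * B' ^ θ * A' ^ (1 - θ) := by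
    intro A' B' hA' hB' hbound'
    set h := (A' / B') ^ (k⁻¹ : ℝ)
    have hhk : h ^ k * B' = A' := by
      rw [Real.rpow_inv_natCast_pow (by positivity) hk.ne', div_mul_cancel₀ _ hB'.ne']
    have hhj : h ^ j = A' ^ θ / B' ^ θ := by
      rw [← Real.rpow_natCast, ← Real.rpow_mul (by positivity), Real.div_rpow hA'.le hB'.le,
        inv_mul_eq_div]
    have := hbound' h (by positivity)
    rw [hhk, hhj, ← le_div_iff₀' (by positivity)] at this
    refine this.trans_eq ?_
    rw [Real.rpow_sub hA', Real.rpow_one]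
    field_simp
    ring
  have hperturb : ∀ ε > 0, a ≤ 2 * C * (B + ε) ^ θ * (A + ε) ^ (1 - θ) := fun ε hε =>
    hpos _ _ (by positivity) (by positivity) fun h hh =>
      (hbound h hh).trans (by gcongr <;> linarith)
  have hcont : Continuous fun ε : ℝ => 2 * C * (B + ε) ^ θ * (A + ε) ^ (1 - θ) :=
    (continuous_const.mul ((continuous_const.add continuous_id).rpow_const fun _ => Or.inr hθ0)).mul
      ((continuous_const.add continuous_id).rpow_const fun _ => Or.inr hθ1)
  have hlim := (hcont.tendsto 0).mono_left (nhdsWithin_le_nhds (s := Set.Ioi 0))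
  simp only [add_zero] at hlim
  exact ge_of_tendsto hlim (eventually_nhdsWithin_of_forall hperturb)

theorem stmt17_general (n j k : ℕ) (hjk : j < k) :
    ∃ C : ℝ, 0 < C ∧
      ∀ (V : Type) (_ : NormedAddCommGroup V) (_ : NormedSpace ℝ V)
        (f : (Fin n → ℝ) → V) (M₀ Mk : ℝ),
        0 ≤ M₀ → 0 ≤ Mk → ContDiff ℝ (k : ℕ∞) f →
        (∀ x, ‖f x‖ ≤ M₀) →
        (∀ x, ‖iteratedFDeriv ℝ k f x‖ ≤ Mk) →
        ∀ x, ‖iteratedFDeriv ℝ j f x‖ ≤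
          C * Mk ^ ((j : ℝ) / (k : ℝ)) * M₀ ^ (1 - (j : ℝ) / (k : ℝ)) := by
  obtain ⟨C, hC, hbound⟩ := exists_pow_mul_norm_iteratedFDeriv_le hjk
  refine ⟨2 * C, by positivity, fun V _ _ f M₀ Mk hM₀ hMk hf hf₀ hfk x => ?_⟩
  exact le_two_mul_rpow_mul_rpow_of_forall_pow_mul_le (by omega) hjk.le hM₀ hMk hC.le
    fun h hh => hbound f M₀ Mk h hf hf₀ hfk hh x

/-- Landau–Kolmogorov interpolation inequality: for `0 < j < k` there is a
constant `C` depending only on `j, k, n` such that for every `C^k` function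
`f : ℝⁿ → V` into a normed space with `‖f‖ ≤ M₀` and `‖D^k f‖ ≤ M_k` everywhere,
one has `sup ‖D^j f‖ ≤ C M_k^{j/k} M₀^{1-j/k}`. -/
theorem stmt17 (n j k : ℕ) (hj : 0 < j) (hjk : j < k) :
    ∃ C : ℝ, 0 < C ∧
      ∀ (V : Type) (_ : NormedAddCommGroup V) (_ : NormedSpace ℝ V)
        (f : (Fin n → ℝ) → V) (M₀ Mk : ℝ),
        0 ≤ M₀ → 0 ≤ Mk → ContDiff ℝ (k : ℕ∞) f →
        (∀ x, ‖f x‖ ≤ M₀) →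
        (∀ x, ‖iteratedFDeriv ℝ k f x‖ ≤ Mk) →
        ∀ x, ‖iteratedFDeriv ℝ j f x‖ ≤
          C * Mk ^ ((j : ℝ) / (k : ℝ)) * M₀ ^ (1 - (j : ℝ) / (k : ℝ)) :=
  stmt17_general n j k hjk
end
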